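/- arXiv:1108.2801 — 7 statements merged into one kernel-verified Lean document; each statement's English description precedes it below -/
import Mathlib

section
/- Let h : ℂ \ {0} → ℂ \ {0} be an injective holomorphic map of the punctured plane to itself. Then there exists a non-zero constant c such that either h(z) = c·z for all z ≠ 0, or h(z) = c/z for all z ≠ 0. -/
/-!
An injective holomorphic map has no essential singularity at an isolated puncture: by the open
mapping theorem it keeps away from a small disc around some value `w` near the puncture, so
`1 / (f - w)` is bounded there and extends. Hence `h` has either a finite limit or a pole at `0`,
and likewise at `∞`. By Liouville, two finite limits would make `h` constant and two poles would
make `1 / h` vanish. If `h` has a finite limit at `0` and a pole at `∞`, the limit is `0` (else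
`1 / h` extends and vanishes), so both `h` and `w ↦ 1 / h (1 / w)` extend to injective entire
functions vanishing at `0`. Their derivatives at `0` are non-zero, because near a zero of order
`n ≥ 2` a function is `n`-to-one; thus `h z / z` has finite limits at `0` and at `∞` and is
constant. The case of a pole at `0` is the previous one for `z ↦ h (1 / z)`.
-/

open Filter Topology Metric Bornology Set Function Complex

theorem Complex.differentiable_update_of_tendsto {f : ℂ → ℂ} {c L : ℂ}
    (hf : DifferentiableOn ℂ f {c}ᶜ) (hL : Tendsto f (𝓝[≠] c) (𝓝 L)) :
    Differentiable ℂ (update f c L) := by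
  rw [← differentiableOn_univ, ← differentiableOn_compl_singleton_and_continuousAt_iff
    (c := c) univ_mem, ← compl_eq_univ_sdiff]
  exact ⟨hf.congr fun z hz => update_of_ne hz _ _, continuousAt_update_same.mpr hL⟩

theorem Complex.eqOn_of_tendsto_nhdsNE_zero_of_tendsto_cobounded {f : ℂ → ℂ} {L M : ℂ}
    (hf : DifferentiableOn ℂ f {0}ᶜ) (h₀ : Tendsto f (𝓝[≠] 0) (𝓝 L))
    (h_inf : Tendsto f (cobounded ℂ) (𝓝 M)) : EqOn f (fun _ => M) {0}ᶜ := by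
  have hF := differentiable_update_of_tendsto hf h₀
  intro z hz
  rw [← update_of_ne hz L f]
  refine hF.apply_eq_of_tendsto_cocompact z ?_
  rw [← cobounded_eq_cocompact]
  exact h_inf.congr' ((eventually_ne_cobounded 0).mono fun w hw => (update_of_ne hw _ _).symm)

theorem Complex.exists_tendsto_or_tendsto_cobounded_of_le_norm_sub {f : ℂ → ℂ}
    {c w : ℂ} {r : ℝ} (hd : ∀ᶠ z in 𝓝[≠] c, DifferentiableAt ℂ f z) (hr : 0 < r)
    (hw : ∀ᶠ z in 𝓝[≠] c, r ≤ ‖f z - w‖) :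
    (∃ L, Tendsto f (𝓝[≠] c) (𝓝 L)) ∨ Tendsto f (𝓝[≠] c) (cobounded ℂ) := by
  have hne : ∀ᶠ z in 𝓝[≠] c, f z - w ≠ 0 :=
    hw.mono fun z hz => norm_pos_iff.mp (hr.trans_le hz)
  set g : ℂ → ℂ := fun z => (f z - w)⁻¹
  have hgd : ∀ᶠ z in 𝓝[≠] c, DifferentiableAt ℂ g z :=
    (hd.and hne).mono fun z hz => (hz.1.sub_const w).inv hz.2
  have hgb : IsBoundedUnder (· ≤ ·) (𝓝[≠] c) fun z => ‖g z - g c‖ := by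
    refine ⟨r⁻¹ + ‖g c‖, eventually_map.mpr (hw.mono fun z hz => ?_)⟩
    calc ‖g z - g c‖ ≤ ‖g z‖ + ‖g c‖ := norm_sub_le _ _
      _ ≤ r⁻¹ + ‖g c‖ := by
        gcongr
        simpa [g, norm_inv] using inv_anti₀ hr hz
  have hg := tendsto_limUnder_of_differentiable_on_punctured_nhds_of_bounded_under hgd hgb
  have hfg : (fun z => w + (g z)⁻¹) =ᶠ[𝓝[≠] c] f := hne.mono fun z _ => by simp [g]
  rcases eq_or_ne (limUnder (𝓝[≠] c) g) 0 with hm | hm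
  · right
    rw [hm] at hg
    have hg' : Tendsto g (𝓝[≠] c) (𝓝[≠] 0) :=
      tendsto_nhdsWithin_iff.mpr ⟨hg, hne.mono fun z hz => inv_ne_zero hz⟩
    exact ((tendsto_const_add_cobounded w).comp (tendsto_inv₀_nhdsNE_zero.comp hg')).congr' hfg
  · exact .inl ⟨_, (tendsto_const_nhds.add (hg.inv₀ hm)).congr' hfg⟩

theorem Set.InjOn.not_eventually_eq {X Y : Type*} [TopologicalSpace X] {f : X → Y} {U : Set X}
    {a : X} [(𝓝[≠] a).NeBot] (hinj : InjOn f U) (hU : U ∈ 𝓝 a) : ¬∀ᶠ z in 𝓝 a, f z = f a :=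
  fun h => by
    have h' : ∀ᶠ z in 𝓝[≠] a, (f z = f a ∧ z ∈ U) ∧ z ≠ a :=
      ((h.and hU).filter_mono nhdsWithin_le_nhds).and self_mem_nhdsWithin
    obtain ⟨z, ⟨hfz, hz⟩, hne⟩ := h'.exists
    exact hne (hinj hz (mem_of_mem_nhds hU) hfz)

theorem AnalyticAt.exists_pos_le_norm_sub_of_injOn {f : ℂ → ℂ} {a : ℂ} {U : Set ℂ}
    (hf : AnalyticAt ℂ f a) (hU : U ∈ 𝓝 a) (hinj : InjOn f U) {δ : ℝ} (hδ : 0 < δ) :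
    ∃ r > 0, ∀ z ∈ U, δ ≤ dist z a → r ≤ ‖f z - f a‖ := by
  rcases hf.eventually_constant_or_nhds_le_map_nhds with hconst | hopen
  · exact absurd hconst (hinj.not_eventually_eq hU)
  obtain ⟨r, hr, hball⟩ := Metric.mem_nhds_iff.mp
    (hopen (image_mem_map (inter_mem hU (ball_mem_nhds a hδ))))
  refine ⟨r, hr, fun z hz hδz => not_lt.mp fun hlt => ?_⟩
  obtain ⟨z', ⟨hz'U, hz'a⟩, hfz'⟩ := hball (mem_ball_iff_norm.mpr hlt)
  rw [hinj hz'U hz hfz'] at hz'a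
  exact (mem_ball.mp hz'a).not_ge hδz

theorem exists_ne_pow_eq_pow_of_mem_nhds {s : Set ℂ} (hs : s ∈ 𝓝 0) {n : ℕ} (hn : 2 ≤ n) :
    ∃ a ∈ s, ∃ b ∈ s, a ≠ b ∧ a ^ n = b ^ n := by
  have hn0 : n ≠ 0 := by omega
  have hζ := isPrimitiveRoot_exp n hn0
  obtain ⟨ε, hε, hball⟩ := Metric.mem_nhds_iff.mp hs
  set a : ℂ := ((ε / 2 : ℝ) : ℂ)
  have ha : a ≠ 0 := by simp [a, hε.ne']
  have ha_mem : a ∈ ball (0 : ℂ) ε := by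
    simp [a, abs_of_pos hε, hε]
  refine ⟨a, hball ha_mem, _ * a, hball ?_, ?_, by rw [mul_pow, hζ.pow_eq_one, one_mul]⟩
  · simpa [norm_mul, hζ.norm'_eq_one hn0] using ha_mem
  · intro h
    exact hζ.ne_one (by omega) (mul_eq_right₀ ha |>.mp h.symm)

theorem AnalyticAt.exists_pow_eq {g : ℂ → ℂ} {z₀ : ℂ} (hg : AnalyticAt ℂ g z₀) (hg₀ : g z₀ ≠ 0)
    {n : ℕ} (hn : n ≠ 0) : ∃ r : ℂ → ℂ, AnalyticAt ℂ r z₀ ∧ r z₀ ≠ 0 ∧ ∀ z, r z ^ n = g z := by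
  set b := g z₀ ^ (n⁻¹ : ℂ)
  refine ⟨fun z => b * (g z / g z₀) ^ (n⁻¹ : ℂ), ?_, ?_, fun z => ?_⟩
  · refine analyticAt_const.mul ((hg.div analyticAt_const hg₀).cpow analyticAt_const ?_)
    simp [hg₀]
  · simp [b, hg₀]
  · rw [mul_pow, cpow_nat_inv_pow _ hn, cpow_nat_inv_pow _ hn]
    field_simp

theorem not_injOn_of_eventuallyEq_add_pow {f φ : ℂ → ℂ} {z₀ φ' c : ℂ} {n : ℕ}
    (hφ : HasStrictDerivAt φ φ' z₀) (hφ' : φ' ≠ 0) (hφ₀ : φ z₀ = 0) (hn : 2 ≤ n)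
    (hf : ∀ᶠ z in 𝓝 z₀, f z = c + φ z ^ n) {U : Set ℂ} (hU : U ∈ 𝓝 z₀) : ¬InjOn f U := by
  intro hinj
  have hV : φ '' {z ∈ U | f z = c + φ z ^ n} ∈ 𝓝 0 := by
    rw [← hφ₀, ← hφ.map_nhds_eq hφ']
    exact image_mem_map (inter_mem hU hf)
  obtain ⟨_, ⟨z₁, ⟨hz₁, hf₁⟩, rfl⟩, _, ⟨z₂, ⟨hz₂, hf₂⟩, rfl⟩, hne, hpow⟩ :=
    exists_ne_pow_eq_pow_of_mem_nhds hV hn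
  exact hne (congrArg φ (hinj hz₁ hz₂ (by rw [hf₁, hf₂, hpow])))

theorem AnalyticAt.deriv_ne_zero_of_injOn {f : ℂ → ℂ} {z₀ : ℂ} (hf : AnalyticAt ℂ f z₀)
    {U : Set ℂ} (hU : U ∈ 𝓝 z₀) (hinj : InjOn f U) : deriv f z₀ ≠ 0 := by
  have hnc : ¬∀ᶠ z in 𝓝 z₀, f z - f z₀ = 0 := by
    simpa only [sub_eq_zero] using hinj.not_eventually_eq hU
  obtain ⟨n, g, hg, hg₀, hfg⟩ :=
    (hf.sub analyticAt_const).exists_eventuallyEq_pow_smul_nonzero_iff.mpr hnc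
  simp only [Pi.sub_apply, smul_eq_mul] at hfg
  have hn : n = 1 := by
    have hn₀ : n ≠ 0 := by
      rintro rfl
      simpa [hg₀.symm] using hfg.self_of_nhds
    by_contra hn₁
    obtain ⟨r, hr, hr₀, hrg⟩ := hg.exists_pow_eq hg₀ hn₀
    have hφ : HasStrictDerivAt (fun z => (z - z₀) * r z) (r z₀) z₀ := by
      simpa using
        HasStrictDerivAt.fun_mul ((hasStrictDerivAt_id z₀).sub_const z₀) hr.hasStrictDerivAt
    refine not_injOn_of_eventuallyEq_add_pow hφ hr₀ (c := f z₀) (n := n) (by simp) (by omega) ?_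
      hU hinj
    filter_upwards [hfg] with z hz
    rw [mul_pow, hrg, ← hz]
    ring
  subst hn
  have hd : HasDerivAt (fun z => f z₀ + (z - z₀) ^ 1 * g z) (g z₀) z₀ := by
    simpa using (HasDerivAt.mul ((hasDerivAt_id z₀).sub_const z₀)
      hg.differentiableAt.hasDerivAt).const_add (f z₀)
  rwa [(hd.congr_of_eventuallyEq
    (hfg.mono fun z hz => by simp only; linear_combination hz)).deriv]

theorem DifferentiableOn.comp_inv_compl_zero {𝕜 : Type*} [NontriviallyNormedField 𝕜]
    {f : 𝕜 → 𝕜} (hf : DifferentiableOn 𝕜 f {0}ᶜ) : DifferentiableOn 𝕜 (fun z => f z⁻¹) {0}ᶜ :=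
  hf.comp (differentiableOn_inv.mono fun _ hz => hz) fun _ hz => inv_ne_zero hz

theorem Set.InjOn.comp_inv_compl_zero {α β : Type*} [GroupWithZero α] {f : α → β}
    (hf : InjOn f {0}ᶜ) : InjOn (fun z => f z⁻¹) {0}ᶜ :=
  hf.comp inv_injective.injOn fun _ hz => inv_ne_zero hz

theorem Complex.exists_tendsto_nhdsNE_zero_or_tendsto_cobounded {f : ℂ → ℂ}
    (hf : DifferentiableOn ℂ f {0}ᶜ) (hinj : InjOn f {0}ᶜ) :
    (∃ L, Tendsto f (𝓝[≠] 0) (𝓝 L)) ∨ Tendsto f (𝓝[≠] 0) (cobounded ℂ) := by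
  have hopen : ({0}ᶜ : Set ℂ) ∈ 𝓝 1 := isOpen_compl_singleton.mem_nhds one_ne_zero
  obtain ⟨r, hr, hfar⟩ := (hf.analyticAt hopen).exists_pos_le_norm_sub_of_injOn hopen hinj
    one_half_pos
  refine exists_tendsto_or_tendsto_cobounded_of_le_norm_sub (w := f 1)
    (eventually_nhdsWithin_of_forall fun z hz => hf.differentiableAt
      (isOpen_compl_singleton.mem_nhds hz)) hr ?_
  filter_upwards [self_mem_nhdsWithin, nhdsWithin_le_nhds (ball_mem_nhds 0 one_half_pos)]
    with z hz hz'
  have h₁ : dist (1 : ℂ) 0 = 1 := by simp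
  exact hfar z hz (by linarith [dist_triangle_left (1 : ℂ) 0 z, mem_ball.mp hz'])

theorem Complex.exists_tendsto_cobounded_or_tendsto_cobounded {f : ℂ → ℂ}
    (hf : DifferentiableOn ℂ f {0}ᶜ) (hinj : InjOn f {0}ᶜ) :
    (∃ M, Tendsto f (cobounded ℂ) (𝓝 M)) ∨ Tendsto f (cobounded ℂ) (cobounded ℂ) := by
  have hk := exists_tendsto_nhdsNE_zero_or_tendsto_cobounded
    hf.comp_inv_compl_zero hinj.comp_inv_compl_zero
  exact hk.imp (fun ⟨M, hM⟩ => ⟨M, by simpa [comp_def] using hM.comp tendsto_inv₀_cobounded'⟩)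
    fun h => by simpa [comp_def] using h.comp tendsto_inv₀_cobounded'

theorem Complex.not_tendsto_cobounded_of_tendsto_nhdsNE_zero {f : ℂ → ℂ} {L M : ℂ}
    (hf : DifferentiableOn ℂ f {0}ᶜ) (hinj : InjOn f {0}ᶜ) (h₀ : Tendsto f (𝓝[≠] 0) (𝓝 L)) :
    ¬Tendsto f (cobounded ℂ) (𝓝 M) := fun h_inf => by
  have hconst := eqOn_of_tendsto_nhdsNE_zero_of_tendsto_cobounded hf h₀ h_inf
  have h12 : f 1 = f 2 := (hconst one_ne_zero).trans (hconst two_ne_zero).symm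
  norm_num [hinj.eq_iff one_ne_zero two_ne_zero] at h12

structure IsPuncturedPlaneEmbedding (f : ℂ → ℂ) : Prop where
  differentiableOn : DifferentiableOn ℂ f {0}ᶜ
  injOn : InjOn f {0}ᶜ
  mapsTo : MapsTo f {0}ᶜ {0}ᶜ

namespace IsPuncturedPlaneEmbedding

variable {f : ℂ → ℂ} (hf : IsPuncturedPlaneEmbedding f)
include hf

theorem comp_inv : IsPuncturedPlaneEmbedding fun z => f z⁻¹ :=
  ⟨hf.differentiableOn.comp_inv_compl_zero, hf.injOn.comp_inv_compl_zero,
    fun _ hz => hf.mapsTo (inv_ne_zero hz)⟩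

theorem inv : IsPuncturedPlaneEmbedding fun z => (f z)⁻¹ :=
  ⟨hf.differentiableOn.inv fun _ hz => hf.mapsTo hz,
    fun _ hz _ hw h => hf.injOn hz hw (inv_injective h), fun _ hz => inv_ne_zero (hf.mapsTo hz)⟩

theorem exists_ne_zero_tendsto_div_self (h₀ : Tendsto f (𝓝[≠] 0) (𝓝 0)) :
    ∃ a ≠ 0, Tendsto (fun z => f z / z) (𝓝[≠] 0) (𝓝 a) := by
  have hF := differentiable_update_of_tendsto hf.differentiableOn h₀
  have hFinj : InjOn (update f 0 0) univ := by
    rw [← compl_union_self {(0 : ℂ)}, union_singleton, injOn_insert (by simp)]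
    refine ⟨hf.injOn.congr fun z hz => (update_of_ne hz _ _).symm, ?_⟩
    rintro ⟨z, hz, hFz⟩
    exact hf.mapsTo hz (by simpa [update_of_ne hz] using hFz)
  refine ⟨_, (hF.analyticAt 0).deriv_ne_zero_of_injOn univ_mem hFinj,
    (hasDerivAt_iff_tendsto_slope.mp (hF 0).hasDerivAt).congr' ?_⟩
  filter_upwards [self_mem_nhdsWithin] with z hz
  simp [slope_def_field, update_of_ne hz]

theorem exists_eq_const_mul {L : ℂ} (h₀ : Tendsto f (𝓝[≠] 0) (𝓝 L))
    (h_inf : Tendsto f (cobounded ℂ) (cobounded ℂ)) : ∃ c ≠ 0, ∀ z ≠ 0, f z = c * z := by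
  obtain rfl : L = 0 := by
    by_contra hL
    exact not_tendsto_cobounded_of_tendsto_nhdsNE_zero hf.inv.differentiableOn hf.inv.injOn
      (h₀.inv₀ hL) (tendsto_inv₀_cobounded.comp h_inf)
  obtain ⟨a, -, ha⟩ := hf.exists_ne_zero_tendsto_div_self h₀
  obtain ⟨b, hb, hb'⟩ := hf.comp_inv.inv.exists_ne_zero_tendsto_div_self
    (tendsto_inv₀_cobounded.comp (h_inf.comp tendsto_inv₀_nhdsNE_zero))
  have h_inf' : Tendsto (fun z => f z / z) (cobounded ℂ) (𝓝 b⁻¹) := by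
    refine ((hb'.comp tendsto_inv₀_cobounded').inv₀ hb).congr fun z => ?_
    simp [div_eq_mul_inv, mul_comm]
  have hconst := eqOn_of_tendsto_nhdsNE_zero_of_tendsto_cobounded
    (hf.differentiableOn.div differentiableOn_id fun _ hz => hz) ha h_inf'
  exact ⟨b⁻¹, inv_ne_zero hb, fun z hz => by simpa [div_eq_iff hz] using hconst hz⟩

end IsPuncturedPlaneEmbedding

/-- An injective holomorphic self-map of the punctured plane ℂ* is either
`z ↦ c·z` or `z ↦ c/z` for some non-zero constant `c`. -/
theorem stmt0 (h : ℂ → ℂ)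
    (hmaps : ∀ z : ℂ, z ≠ 0 → h z ≠ 0)
    (hinj : ∀ z w : ℂ, z ≠ 0 → w ≠ 0 → h z = h w → z = w)
    (hdiff : ∀ z : ℂ, z ≠ 0 → DifferentiableAt ℂ h z) :
    ∃ c : ℂ, c ≠ 0 ∧
      ((∀ z : ℂ, z ≠ 0 → h z = c * z) ∨ (∀ z : ℂ, z ≠ 0 → h z = c / z)) := by
  have hf : IsPuncturedPlaneEmbedding h :=
    ⟨fun z hz => (hdiff z hz).differentiableWithinAt, fun z hz w hw => hinj z w hz hw, hmaps⟩
  rcases exists_tendsto_nhdsNE_zero_or_tendsto_cobounded hf.differentiableOn hf.injOn with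
    ⟨L, hL⟩ | hL <;>
  rcases exists_tendsto_cobounded_or_tendsto_cobounded hf.differentiableOn hf.injOn with
    ⟨M, hM⟩ | hM
  · exact (not_tendsto_cobounded_of_tendsto_nhdsNE_zero hf.differentiableOn hf.injOn hL hM).elim
  · obtain ⟨c, hc, hcz⟩ := hf.exists_eq_const_mul hL hM
    exact ⟨c, hc, .inl hcz⟩
  · obtain ⟨c, hc, hcz⟩ := hf.comp_inv.exists_eq_const_mul
      (hM.comp tendsto_inv₀_nhdsNE_zero) (hL.comp tendsto_inv₀_cobounded')
    refine ⟨c, hc, .inr fun z hz => ?_⟩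
    simpa [div_eq_mul_inv] using hcz z⁻¹ (inv_ne_zero hz)
  · exact (not_tendsto_cobounded_of_tendsto_nhdsNE_zero hf.inv.differentiableOn hf.inv.injOn
      (tendsto_inv₀_cobounded.comp hL) (tendsto_inv₀_cobounded.comp hM)).elim
end

section
/- For f₀(z) = z + z², the preimage of the annulus 𝔸 = {1/2 < |z+1/2| < 2} under f₀ is contained in 𝔸: if f₀(z) ∈ 𝔸 then z ∈ 𝔸. -/
/-! Conjugating by `z ↦ z + 1/2` turns `f₀` into `w ↦ w² + 1/4`. The triangle inequality gives
`‖w² + 1/4‖ ≤ ‖w‖² + 1/4 ≤ 1/2` on the closed disc `‖w‖ ≤ 1/2`, and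
`‖w² + 1/4‖ ≥ ‖w‖² - 1/4 ≥ 15/4` outside the open disc `‖w‖ < 2`, so a point that the map
sends into the annulus `1/2 < ‖w‖ < 2` lies in it already. -/

section NormedDivisionRing

variable {𝕜 : Type*} [NormedDivisionRing 𝕜]

theorem norm_sq_add_le (w c : 𝕜) : ‖w ^ 2 + c‖ ≤ ‖w‖ ^ 2 + ‖c‖ := by
  rw [← norm_pow]
  exact norm_add_le _ _

theorem norm_sq_sub_norm_le (w c : 𝕜) : ‖w‖ ^ 2 - ‖c‖ ≤ ‖w ^ 2 + c‖ := by
  rw [← norm_pow, ← norm_neg c, ← sub_neg_eq_add]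
  exact norm_sub_norm_le _ _

end NormedDivisionRing

theorem mem_annulus_of_sq_add_quarter_mem_annulus (w : ℂ)
    (hw : 1/2 < ‖w ^ 2 + 1/4‖ ∧ ‖w ^ 2 + 1/4‖ < 2) : 1/2 < ‖w‖ ∧ ‖w‖ < 2 := by
  have hquarter : ‖(1/4 : ℂ)‖ = 1/4 := by norm_num
  have hupper := norm_sq_add_le w (1/4)
  have hlower := norm_sq_sub_norm_le w (1/4)
  rw [hquarter] at hupper hlower
  constructor
  · by_contra! hsmall
    nlinarith [norm_nonneg w]
  · by_contra! hlarge
    nlinarith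

/-- For `f₀(z) = z + z²` the preimage of the annulus `𝔸 = {1/2 < |z+1/2| < 2}`
is contained in `𝔸`: if `f₀(z) ∈ 𝔸` then `z ∈ 𝔸`. -/
theorem stmt5 (f : ℂ → ℂ) (hf : ∀ z, f z = z + z ^ 2) (z : ℂ)
    (hz : 1/2 < ‖f z + 1/2‖ ∧ ‖f z + 1/2‖ < 2) :
    1/2 < ‖z + 1/2‖ ∧ ‖z + 1/2‖ < 2 := by
  have hconj : f z + 1/2 = (z + 1/2) ^ 2 + 1/4 := by rw [hf]; ring
  rw [hconj] at hz
  exact mem_annulus_of_sq_add_quarter_mem_annulus (z + 1/2) hz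
end

section
/- Let G be the branch of the inverse of K(z) = z/(z-1)² that fixes 0, defined on ℂ \ (-∞, -1/4]. Then G maps the open upper half-plane into itself, maps the open lower half-plane into itself, and maps ℂ \ (-∞, 0] into itself. -/
/-!
`K` sends real points to real points, so `G` sends non-real points to non-real points; by
connectedness `Im G` has constant sign on each open half-plane. Near `0`, `G z ≈ z` because
`G z = z (G z - 1)²` and `G 0 = 0`, which fixes the signs. Finally, if `G z = x ≤ 0` then
`z = K x = x / (x - 1)² ≤ 0`.
-/

open Complex Filter Topology

lemma IsPreconnected.pos_of_ne_zero {X : Type*} [TopologicalSpace X] {S : Set X}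
    (hS : IsPreconnected S) {f : X → ℝ} (hf : ContinuousOn f S) (hne : ∀ x ∈ S, f x ≠ 0)
    {x₀ : X} (hx₀ : x₀ ∈ S) (h₀ : 0 < f x₀) {x : X} (hx : x ∈ S) : 0 < f x := by
  by_contra! hle
  obtain ⟨c, hc, hc0⟩ := hS.intermediate_value hx hx₀ hf ⟨hle, h₀.le⟩
  exact hne c hc hc0

lemma Complex.isOpen_setOf_not_exists_ofReal_le (a : ℝ) :
    IsOpen {z : ℂ | ¬∃ x : ℝ, x ≤ a ∧ z = x} := by
  have h : {z : ℂ | ¬∃ x : ℝ, x ≤ a ∧ z = x} = ((↑) '' Set.Iic a)ᶜ := by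
    ext z; simp [eq_comm]
  rw [h]
  exact (isometry_ofReal.isClosedEmbedding.isClosedMap _ isClosed_Iic).isOpen_compl

lemma Complex.ofReal_div_sub_one_sq (x : ℝ) :
    (x : ℂ) / (x - 1) ^ 2 = ((x / (x - 1) ^ 2 : ℝ) : ℂ) := by
  push_cast; rfl

lemma eq_mul_sub_one_sq_of_div_eq {R : Type*} [DivisionRing R] {w z : R}
    (h : w / (w - 1) ^ 2 = z) (hz : z ≠ 0) : w = z * (w - 1) ^ 2 := by
  have hne : (w - 1) ^ 2 ≠ 0 := by
    rintro h0
    rw [h0, div_zero] at h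
    exact hz h.symm
  exact (div_eq_iff hne).1 h

lemma eventually_pos_mul_im_of_eq_mul_sub_one_sq {G : ℂ → ℂ} (hc : ContinuousAt G 0)
    (h0 : G 0 = 0) (hG : ∀ z : ℂ, z.im ≠ 0 → G z = z * (G z - 1) ^ 2) :
    ∀ᶠ s : ℝ in 𝓝[≠] 0, 0 < s * (G (s * I)).im := by
  have hcI : ContinuousAt (fun s : ℝ => G (s * I)) 0 :=
    hc.comp_of_eq (by fun_prop) (by simp)
  have hre : ∀ᶠ s : ℝ in 𝓝 0, 0 < ((G (s * I) - 1) ^ 2).re := by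
    refine (continuous_re.continuousAt.comp ((hcI.sub continuousAt_const).pow 2)).eventually
      (eventually_gt_nhds ?_)
    simp [h0]
  filter_upwards [nhdsWithin_le_nhds hre, self_mem_nhdsWithin] with s hs (hs0 : s ≠ 0)
  have him : (G (s * I)).im = s * ((G (s * I) - 1) ^ 2).re :=
    (congrArg im (hG _ (by simpa using hs0))).trans (by simp)
  rw [him, ← mul_assoc]
  exact mul_pos (mul_self_pos.2 hs0) hs

lemma preserves_halfPlanes_of_eventually_pos_mul_im {G : ℂ → ℂ}
    (hc : ContinuousOn G {z | z.im ≠ 0}) (hGim : ∀ z : ℂ, z.im ≠ 0 → (G z).im ≠ 0)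
    (hsign : ∀ᶠ s : ℝ in 𝓝[≠] 0, 0 < s * (G (s * I)).im) :
    (∀ z : ℂ, 0 < z.im → 0 < (G z).im) ∧ (∀ z : ℂ, z.im < 0 → (G z).im < 0) := by
  obtain ⟨s₁, h₁, hs₁⟩ :=
    ((hsign.filter_mono (nhdsGT_le_nhdsNE 0)).and self_mem_nhdsWithin).exists
  obtain ⟨s₂, h₂, hs₂⟩ :=
    ((hsign.filter_mono (nhdsLT_le_nhdsNE 0)).and self_mem_nhdsWithin).exists
  have hcont : ∀ S : Set ℂ, (∀ z ∈ S, z.im ≠ 0) → ContinuousOn (fun z => (G z).im) S :=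
    fun S hS => continuous_im.comp_continuousOn (hc.mono hS)
  refine ⟨fun z hz => ?_, fun z hz => ?_⟩
  · exact (convex_halfSpace_im_gt 0).isPreconnected.pos_of_ne_zero
      (hcont _ fun w hw => hw.ne') (fun w hw => hGim w hw.ne') (x₀ := s₁ * I) (by simpa)
      (pos_of_mul_pos_right h₁ hs₁.le) hz
  · exact neg_pos.1 <| (convex_halfSpace_im_lt 0).isPreconnected.pos_of_ne_zero
      (hcont _ fun w hw => hw.ne).neg (fun w hw => neg_ne_zero.2 (hGim w hw.ne)) (x₀ := s₂ * I)
      (by simpa) (neg_pos.2 (neg_of_mul_pos_right h₂ hs₂.le)) hz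

/-- Let `G` be the branch of the inverse of `K(z) = z/(z-1)²` fixing `0`, defined
and holomorphic on `ℂ \ (-∞, -1/4]`.  Then `G` maps the open upper half-plane into
itself, the open lower half-plane into itself, and `ℂ \ (-∞, 0]` into itself. -/
theorem stmt10 (K G : ℂ → ℂ) (hK : ∀ z, K z = z / (z - 1) ^ 2)
    (dom : Set ℂ) (hdom : dom = {z : ℂ | ¬ ∃ x : ℝ, x ≤ -(1/4) ∧ z = (x : ℂ)})
    (hG : DifferentiableOn ℂ G dom)
    (hGK : ∀ z ∈ dom, K (G z) = z)
    (hG0 : G 0 = 0) :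
    (∀ z : ℂ, 0 < z.im → 0 < (G z).im) ∧
    (∀ z : ℂ, z.im < 0 → (G z).im < 0) ∧
    (∀ z : ℂ, (¬ ∃ x : ℝ, x ≤ 0 ∧ z = (x : ℂ)) → ¬ ∃ x : ℝ, x ≤ 0 ∧ G z = (x : ℂ)) := by
  have hKG : ∀ z ∈ dom, G z / (G z - 1) ^ 2 = z := fun z hz => (hK _).symm.trans (hGK z hz)
  have hopen : IsOpen dom := hdom ▸ isOpen_setOf_not_exists_ofReal_le _
  have hzero : (0 : ℂ) ∈ dom := hdom ▸ fun ⟨x, hx, hx0⟩ => by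
    have : x = 0 := by exact_mod_cast hx0.symm
    linarith
  have im_ne_subset_dom : {z : ℂ | z.im ≠ 0} ⊆ dom := by
    rw [hdom]
    rintro z hz ⟨x, -, rfl⟩
    simp at hz
  have hGim : ∀ z : ℂ, z.im ≠ 0 → (G z).im ≠ 0 := by
    intro z hz hGz
    rw [← hKG z (im_ne_subset_dom hz), ← re_add_im (G z), hGz, ofReal_zero, zero_mul,
      add_zero, ofReal_div_sub_one_sq, ofReal_im] at hz
    exact hz rfl
  have hsign := eventually_pos_mul_im_of_eq_mul_sub_one_sq
    (hG.continuousOn.continuousAt (hopen.mem_nhds hzero)) hG0 fun z hz =>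
      eq_mul_sub_one_sq_of_div_eq (hKG z (im_ne_subset_dom hz)) (by rintro rfl; simp at hz)
  obtain ⟨upper, lower⟩ := preserves_halfPlanes_of_eventually_pos_mul_im
    (hG.continuousOn.mono im_ne_subset_dom) hGim hsign
  refine ⟨upper, lower, ?_⟩
  rintro z hz ⟨x, hx, hGz⟩
  have hzdom : z ∈ dom := hdom ▸ fun ⟨y, hy, h⟩ => hz ⟨y, by linarith, h⟩
  refine hz ⟨x / (x - 1) ^ 2, div_nonpos_of_nonpos_of_nonneg hx (sq_nonneg _), ?_⟩
  rw [← hKG z hzdom, hGz, ofReal_div_sub_one_sq]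
end

section
/- Let F be holomorphic near ∞ with |F(w) - w - 1| < sin(π - α) for all w in the translated sector Δ(α,R) = { w : |Arg(w - R)| < α }, where π/2 < α < π and R > 0, and assume also Re F(w) > Re w + 1/2 on Δ(α,R). Then F maps the closure of Δ(α,R) into Δ(α,R), and Fⁿ(w) → ∞ for every w ∈ Δ(α,R). -/
open Filter Set

/-!
Writing `z = w - R`, the sector is the cone `‖z‖ cos α < Re z`. The hypothesis on `F` puts the
step `δ = F w - w` in the disc of radius `sin (π - α)` about `1`, which lies inside the cone of
half-opening `π - α` about the positive axis, i.e. `-cos α ‖δ‖ < Re δ`. Since `cos α < 0`, the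
triangle inequality `‖z + δ‖ ≥ ‖z‖ - ‖δ‖` then carries the closed sector into the open one.
Divergence follows because each step increases the real part by at least `1/2`.
-/

lemma norm_mul_cos_lt_re_iff {z : ℂ} {α : ℝ} (hα₀ : 0 ≤ α) (hαπ : α ≤ Real.pi) :
    ‖z‖ * Real.cos α < z.re ↔ z ≠ 0 ∧ |Complex.arg z| < α := by
  have hmem : |Complex.arg z| ∈ Icc 0 Real.pi := ⟨abs_nonneg _, Complex.abs_arg_le_pi z⟩
  constructor
  · intro h
    have hz : z ≠ 0 := by rintro rfl; simp at h
    refine ⟨hz, (Real.strictAntiOn_cos.lt_iff_gt ⟨hα₀, hαπ⟩ hmem).mp ?_⟩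
    rw [Real.cos_abs, Complex.cos_arg hz, lt_div_iff₀ (norm_pos_iff.mpr hz)]
    linarith
  · rintro ⟨hz, harg⟩
    have h := Real.strictAntiOn_cos hmem ⟨hα₀, hαπ⟩ harg
    rw [Real.cos_abs, Complex.cos_arg hz, lt_div_iff₀ (norm_pos_iff.mpr hz)] at h
    linarith

lemma norm_mul_cos_lt_re_of_norm_sub_one_lt_sin {δ : ℂ} {θ : ℝ} (hcos : 0 ≤ Real.cos θ)
    (hδ : ‖δ - 1‖ < Real.sin θ) : ‖δ‖ * Real.cos θ < δ.re := by
  have hsq_norm (u : ℂ) : ‖u‖ ^ 2 = u.re ^ 2 + u.im ^ 2 := by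
    rw [Complex.sq_norm, Complex.normSq_apply]; ring
  have hdisc : (δ.re - 1) ^ 2 + δ.im ^ 2 < Real.sin θ ^ 2 := by
    simpa [hsq_norm] using pow_lt_pow_left₀ hδ (norm_nonneg _) two_ne_zero
  have hre : 0 < δ.re := by nlinarith [Real.sin_sq_le_one θ, sq_nonneg δ.im]
  rcases hcos.eq_or_lt with hcos0 | hcos0
  · simpa [← hcos0] using hre
  have hcos_sq : Real.cos θ ^ 2 = 1 - Real.sin θ ^ 2 := by linarith [Real.sin_sq_add_cos_sq θ]
  refine lt_of_pow_lt_pow_left₀ 2 hre.le ?_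
  rw [mul_pow, hsq_norm, hcos_sq]
  -- `δ.re² - ‖δ‖² cos² θ = (δ.re - 1 + sin² θ)² + cos² θ (sin² θ - ‖δ - 1‖²)`
  nlinarith [sq_nonneg (δ.re - 1 + Real.sin θ ^ 2),
    mul_pos (hcos_sq ▸ pow_pos hcos0 2) (sub_pos.mpr hdisc)]

lemma norm_add_mul_lt_re_add {z δ : ℂ} {c : ℝ} (hc : c ≤ 0) (hz : ‖z‖ * c ≤ z.re)
    (hδ : ‖δ‖ * -c < δ.re) : ‖z + δ‖ * c < (z + δ).re := by
  have htri : ‖z‖ - ‖δ‖ ≤ ‖z + δ‖ := by simpa using norm_sub_norm_le z (-δ)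
  calc ‖z + δ‖ * c ≤ (‖z‖ - ‖δ‖) * c := mul_le_mul_of_nonpos_right htri hc
    _ = ‖z‖ * c + ‖δ‖ * -c := by ring
    _ < z.re + δ.re := by linarith
    _ = (z + δ).re := (Complex.add_re z δ).symm

lemma tendsto_norm_iterate_of_re_add_le {F : ℂ → ℂ} {S : Set ℂ} {a : ℝ} (ha : 0 < a)
    (hmaps : MapsTo F S S) (hre : ∀ w ∈ S, w.re + a ≤ (F w).re) {w : ℂ} (hw : w ∈ S) :
    Tendsto (fun n => ‖F^[n] w‖) atTop atTop := by
  have hgrowth : ∀ n : ℕ, w.re + n * a ≤ (F^[n] w).re := by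
    intro n
    induction n with
    | zero => simp
    | succ n ih =>
      rw [Function.iterate_succ_apply']
      have hstep := hre _ (hmaps.iterate n hw)
      push_cast
      linarith
  refine tendsto_atTop_mono (fun n => (hgrowth n).trans (Complex.re_le_norm _)) ?_
  exact tendsto_atTop_add_const_left _ _ (tendsto_natCast_atTop_atTop.atTop_mul_const ha)

theorem stmt12_general (F : ℂ → ℂ) (α R : ℝ)
    (hα1 : Real.pi / 2 < α) (hα2 : α < Real.pi)
    (Δ : Set ℂ) (hΔ : Δ = {w : ℂ | w ≠ (R : ℂ) ∧ |Complex.arg (w - (R : ℂ))| < α})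
    (hbound : ∀ w ∈ closure Δ, ‖F w - w - 1‖ < Real.sin (Real.pi - α))
    (hre : ∀ w ∈ closure Δ, w.re + 1/2 < (F w).re) :
    (∀ w ∈ closure Δ, F w ∈ Δ) ∧
    (∀ w ∈ Δ, Tendsto (fun n => ‖F^[n] w‖) atTop atTop) := by
  have hcos : Real.cos α < 0 := Real.cos_neg_of_pi_div_two_lt_of_lt hα1 (by linarith)
  have hcone : Δ = {w : ℂ | ‖w - R‖ * Real.cos α < (w - R).re} := by
    ext w
    simp only [hΔ, mem_ofPred_eq, norm_mul_cos_lt_re_iff (by linarith) hα2.le, sub_ne_zero]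
  have hclosure : closure Δ ⊆ {w : ℂ | ‖w - R‖ * Real.cos α ≤ (w - R).re} :=
    hcone ▸ closure_lt_subset_le (by fun_prop) (by fun_prop)
  have hmaps : ∀ w ∈ closure Δ, F w ∈ Δ := by
    intro w hw
    have hstep := norm_mul_cos_lt_re_of_norm_sub_one_lt_sin
      (by rw [Real.cos_pi_sub]; linarith) (hbound w hw)
    rw [Real.cos_pi_sub] at hstep
    rw [hcone, mem_ofPred_eq, show F w - R = (w - R) + (F w - w) by ring]
    exact norm_add_mul_lt_re_add hcos.le (hclosure hw) hstep
  refine ⟨hmaps, fun w hw => ?_⟩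
  exact tendsto_norm_iterate_of_re_add_le one_half_pos
    (fun v hv => hmaps v (subset_closure hv)) (fun v hv => (hre v (subset_closure hv)).le) hw

/-- Sector invariance: let `Δ(α,R) = {w : |Arg(w - R)| < α}` with `π/2 < α < π`,
`R > 0`.  If `F` is holomorphic on (a neighborhood of) the closed sector and
satisfies `|F(w) - w - 1| < sin(π - α)` and `Re F(w) > Re w + 1/2` on the closed
sector, then `F` maps the closure of `Δ(α,R)` into `Δ(α,R)`, and `Fⁿ(w) → ∞`
for every `w ∈ Δ(α,R)`. -/
theorem stmt12 (F : ℂ → ℂ) (α R : ℝ)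
    (hα1 : Real.pi / 2 < α) (hα2 : α < Real.pi) (hR : 0 < R)
    (Δ : Set ℂ) (hΔ : Δ = {w : ℂ | w ≠ (R : ℂ) ∧ |Complex.arg (w - (R : ℂ))| < α})
    (hhol : DifferentiableOn ℂ F (closure Δ))
    (hbound : ∀ w ∈ closure Δ, ‖F w - w - 1‖ < Real.sin (Real.pi - α))
    (hre : ∀ w ∈ closure Δ, w.re + 1/2 < (F w).re) :
    (∀ w ∈ closure Δ, F w ∈ Δ) ∧
    (∀ w ∈ Δ, Tendsto (fun n => ‖F^[n] w‖) atTop atTop) :=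
  stmt12_general F α R hα1 hα2 Δ hΔ hbound hre
end

section
/- Let f be holomorphic with f(z) = z + z^{n+1} + O(z^{n+2}) near 0 (n ≥ 1), let ν be a unit vector with ν^n = -1 (an attracting direction), and suppose an orbit zₖ = fᵏ(z₀) stays near 0, converges to 0, with zₖ ≠ 0 for all k. If the orbit converges to 0 along a direction, then the limit of zₖ/|zₖ| is one of the n attracting directions, i.e. an n-th root of -1. -/
/-!
In the coordinate `w = z⁻ⁿ` the germ `z ↦ z + zⁿ⁺¹ + O(zⁿ⁺²)` acts as `w ↦ w - n + o(1)`
near `0`. Along an orbit tending to `0` the increments of `wₖ` therefore tend to `-n`, so by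
Cesàro `wₖ / k → -n`, i.e. `k zₖⁿ → -1/n`. Hence the directions of `zₖⁿ` tend to `-1`, and the
`n`-th power of the limit direction of `zₖ` is `-1`.
-/

open Filter Metric Finset Topology

theorem inv_pow_mul_one_add_sub_inv_pow {K : Type*} [Field K] (n : ℕ) {a b : K} (ha : a ≠ 0)
    (ht : 1 + a ^ n * b ≠ 0) :
    ((a * (1 + a ^ n * b)) ^ n)⁻¹ - (a ^ n)⁻¹
      = -(b * (∑ j ∈ range n, (1 + a ^ n * b) ^ j) / (1 + a ^ n * b) ^ n) := by
  have hg := geom_sum_mul (1 + a ^ n * b) n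
  rw [mul_pow]
  field_simp
  linear_combination hg

theorem tendsto_inv_natCast_smul_of_tendsto_sub {E : Type*} [NormedAddCommGroup E]
    [NormedSpace ℝ E] {u : ℕ → E} {a : E} (h : Tendsto (fun k => u (k + 1) - u k) atTop (𝓝 a)) :
    Tendsto (fun k : ℕ => (k : ℝ)⁻¹ • u k) atTop (𝓝 a) := by
  have hsum : Tendsto (fun k : ℕ => (k : ℝ)⁻¹ • (u k - u 0)) atTop (𝓝 a) := by
    simpa only [Finset.sum_range_sub] using h.cesaro_smul
  have h0 : Tendsto (fun k : ℕ => (k : ℝ)⁻¹ • u 0) atTop (𝓝 0) := by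
    simpa using (tendsto_inv_atTop_nhds_zero_nat (𝕜 := ℝ)).smul_const (u 0)
  simpa [smul_sub] using hsum.add h0

section NormedField

variable {𝕜 : Type*} [NormedField 𝕜] {z : ℕ → 𝕜}

theorem tendsto_div_pow_of_norm_le_mul_pow {w : ℕ → 𝕜} {m : ℕ} {C : ℝ} (hz : ∀ k, z k ≠ 0)
    (hlim : Tendsto z atTop (𝓝 0)) (hw : ∀ k, ‖w k‖ ≤ C * ‖z k‖ ^ (m + 1)) :
    Tendsto (fun k => w k / z k ^ m) atTop (𝓝 0) := by
  refine squeeze_zero_norm (a := fun k => C * ‖z k‖) (fun k => ?_) ?_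
  · have hpos : 0 < ‖z k‖ ^ m := pow_pos (norm_pos_iff.2 (hz k)) m
    rw [norm_div, norm_pow, div_le_iff₀ hpos]
    calc ‖w k‖ ≤ C * ‖z k‖ ^ (m + 1) := hw k
      _ = C * ‖z k‖ * ‖z k‖ ^ m := by ring
  · simpa using (tendsto_norm_zero.comp hlim).const_mul C

theorem tendsto_inv_pow_sub_inv_pow {n : ℕ} (hn : n ≠ 0) (hz : ∀ k, z k ≠ 0)
    (hlim : Tendsto z atTop (𝓝 0))
    (herr : Tendsto (fun k => (z (k + 1) - z k - z k ^ (n + 1)) / z k ^ (n + 1)) atTop (𝓝 0)) :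
    Tendsto (fun k => (z (k + 1) ^ n)⁻¹ - (z k ^ n)⁻¹) atTop (𝓝 (-n)) := by
  set b := fun k => 1 + (z (k + 1) - z k - z k ^ (n + 1)) / z k ^ (n + 1)
  have hb : Tendsto b atTop (𝓝 1) := by simpa using herr.const_add 1
  have hstep : ∀ k, z (k + 1) = z k * (1 + z k ^ n * b k) := fun k => by
    have := pow_ne_zero (n + 1) (hz k)
    simp only [b]
    field_simp
    ring
  have ht : Tendsto (fun k => 1 + z k ^ n * b k) atTop (𝓝 1) := by
    simpa [zero_pow hn] using ((hlim.pow n).mul hb).const_add 1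
  have hsum : Tendsto (fun k => ∑ j ∈ range n, (1 + z k ^ n * b k) ^ j) atTop (𝓝 n) := by
    simpa using tendsto_finsetSum (range n) fun j _ => ht.pow j
  have hne : ∀ k, 1 + z k ^ n * b k ≠ 0 := fun k h => hz (k + 1) (by rw [hstep, h, mul_zero])
  have hlim' := ((hb.mul hsum).div (ht.pow n) (by simp)).neg
  simp only [one_mul, one_pow, div_one] at hlim'
  refine hlim'.congr fun k => ?_
  rw [hstep, inv_pow_mul_one_add_sub_inv_pow n (hz k) (hne k)]
  rfl

end NormedField

section RCLike

variable {𝕜 : Type*} [RCLike 𝕜] {z : ℕ → 𝕜}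

theorem tendsto_natCast_mul_pow {n : ℕ} (hn : n ≠ 0) (hz : ∀ k, z k ≠ 0)
    (hlim : Tendsto z atTop (𝓝 0))
    (herr : Tendsto (fun k => (z (k + 1) - z k - z k ^ (n + 1)) / z k ^ (n + 1)) atTop (𝓝 0)) :
    Tendsto (fun k : ℕ => (k : 𝕜) * z k ^ n) atTop (𝓝 ((-(n : 𝕜))⁻¹)) := by
  have hn' : -(n : 𝕜) ≠ 0 := neg_ne_zero.2 (Nat.cast_ne_zero.2 hn)
  have h := (tendsto_inv_natCast_smul_of_tendsto_sub (u := fun k => (z k ^ n)⁻¹)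
    (tendsto_inv_pow_sub_inv_pow hn hz hlim herr)).inv₀ hn'
  refine h.congr fun k => ?_
  rw [RCLike.real_smul_eq_coe_mul, mul_inv, inv_inv, RCLike.ofReal_inv, inv_inv,
    RCLike.ofReal_natCast]

theorem tendsto_div_norm_pow_of_tendsto_natCast_mul_pow {n : ℕ} {L : 𝕜} (hL : L ≠ 0)
    (h : Tendsto (fun k : ℕ => (k : 𝕜) * z k ^ n) atTop (𝓝 L)) :
    Tendsto (fun k => (z k / (‖z k‖ : 𝕜)) ^ n) atTop (𝓝 (L / (‖L‖ : 𝕜))) := by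
  have hnorm : Tendsto (fun k : ℕ => (‖(k : 𝕜) * z k ^ n‖ : 𝕜)) atTop (𝓝 (‖L‖ : 𝕜)) :=
    (RCLike.continuous_ofReal.tendsto _).comp h.norm
  refine (h.div hnorm (by simpa using hL)).congr' ?_
  filter_upwards [eventually_ne_atTop 0] with k hk
  have hk' : (k : 𝕜) ≠ 0 := Nat.cast_ne_zero.2 hk
  rw [Pi.div_apply, norm_mul, norm_pow, RCLike.norm_natCast, div_pow]
  push_cast
  rw [mul_div_mul_left _ _ hk']

end RCLike

theorem stmt13_general (f : ℂ → ℂ) (n : ℕ) (hn : 1 ≤ n) (r C : ℝ)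
    (hexp : ∀ z ∈ ball (0 : ℂ) r,
      ‖f z - z - z ^ (n + 1)‖ ≤ C * ‖z‖ ^ (n + 2))
    (z₀ : ℂ) (horb : ∀ k : ℕ, f^[k] z₀ ∈ ball (0 : ℂ) r ∧ f^[k] z₀ ≠ 0)
    (hlim : Tendsto (fun k => f^[k] z₀) atTop (nhds 0))
    (ν : ℂ)
    (hdir : Tendsto (fun k => f^[k] z₀ / ((‖f^[k] z₀‖ : ℝ) : ℂ))
      atTop (nhds ν)) :
    ν ^ n = -1 := by
  have hn0 : n ≠ 0 := Nat.one_le_iff_ne_zero.1 hn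
  have hz k : f^[k] z₀ ≠ 0 := (horb k).2
  have herr : Tendsto (fun k => (f^[k + 1] z₀ - f^[k] z₀ - f^[k] z₀ ^ (n + 1))
      / f^[k] z₀ ^ (n + 1)) atTop (𝓝 0) :=
    tendsto_div_pow_of_norm_le_mul_pow hz hlim fun k => by
      rw [Function.iterate_succ_apply']
      exact hexp _ (horb k).1
  have hnC : (n : ℂ) ≠ 0 := Nat.cast_ne_zero.2 hn0
  have hν := tendsto_nhds_unique (hdir.pow n) <| tendsto_div_norm_pow_of_tendsto_natCast_mul_pow
    (inv_ne_zero (neg_ne_zero.2 hnC)) (tendsto_natCast_mul_pow hn0 hz hlim herr)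
  rw [hν, norm_inv, norm_neg, Complex.norm_natCast]
  push_cast
  rw [inv_neg, neg_div, div_self (inv_ne_zero hnC)]

/-- For a parabolic germ `f(z) = z + z^{n+1} + O(z^{n+2})`, if an orbit converges
to `0` (staying near `0` and never hitting `0`) and the direction sequence
`zₖ/|zₖ|` converges to `ν`, then `ν` is an attracting direction: `νⁿ = -1`. -/
theorem stmt13 (f : ℂ → ℂ) (n : ℕ) (hn : 1 ≤ n) (r C : ℝ) (hr : 0 < r)
    (hf : DifferentiableOn ℂ f (ball (0 : ℂ) r))
    (hexp : ∀ z ∈ ball (0 : ℂ) r,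
      ‖f z - z - z ^ (n + 1)‖ ≤ C * ‖z‖ ^ (n + 2))
    (z₀ : ℂ) (horb : ∀ k : ℕ, f^[k] z₀ ∈ ball (0 : ℂ) r ∧ f^[k] z₀ ≠ 0)
    (hlim : Tendsto (fun k => f^[k] z₀) atTop (nhds 0))
    (ν : ℂ)
    (hdir : Tendsto (fun k => f^[k] z₀ / ((‖f^[k] z₀‖ : ℝ) : ℂ))
      atTop (nhds ν)) :
    ν ^ n = -1 :=
  stmt13_general f n hn r C hexp z₀ horb hlim ν hdir
end

section
/- Let F(w) = w + 1 + A/w + O(1/w²) near ∞ and suppose Φ is a univalent analytic function on a sector near ∞ satisfying Φ(F(w)) = Φ(w) + 1. Then there is a unique sequence of complex coefficients b₁, b₂, … such that the formal expression Φ_ps(w) = w - A log w + Σ_{j≥1} b_j w^{-j} satisfies Φ_ps(F(w)) = Φ_ps(w) + 1 as formal power series; moreover, for each n, the finite truncation Φ_n(w) = w - A log w + Σ_{j=1}^n b_j w^{-j} satisfies Φ_n(F(w)) - Φ_n(w) - 1 = O(w^{-(n+2)}). -/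
/-!
In the coordinate `z = 1/w` write `F w = w * u z` with `u z = 1 + z + z * g z`, where
`g z = ∑ aₖ zᵏ` is analytic at `0` with `g 0 = 0` and `g' 0 = A`. On a right half-plane
`log (w * u z) = log w + log (u z)`, so `Φₙ(F w) - Φₙ(w) - 1 = h z + ∑_{j ≤ n} bⱼ vⱼ z` with
`h = g - A log u` and `vⱼ z = zʲ ((u z)⁻ʲ - 1) = -j zʲ⁺¹ + O(zʲ⁺²)`. The coefficient `A` of the
logarithm is exactly what makes `h` vanish to order two; after that the system is triangular:
`bₙ₊₁` is the unique number cancelling the `zⁿ⁺²`-coefficient of `h + ∑_{j ≤ n} bⱼ vⱼ`.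
Finally, for a function analytic at `0`, being `O(w^{-N})` on a right half-plane is the same as
vanishing to order `N` at `0`.
-/

open Filter Finset Complex Asymptotics Bornology FormalMultilinearSeries

open scoped Topology

section AnalyticOrder

variable {𝕜 : Type*} [NontriviallyNormedField 𝕜] {f g : 𝕜 → 𝕜} {z₀ : 𝕜} {m n : ℕ}

theorem AnalyticAt.isBigO_sub_pow_of_natCast_le_analyticOrderAt (hf : AnalyticAt 𝕜 f z₀)
    (hn : n ≤ analyticOrderAt f z₀) : f =O[𝓝 z₀] fun z => (z - z₀) ^ n := by
  obtain ⟨φ, hφ, hfφ⟩ := (natCast_le_analyticOrderAt hf).mp hn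
  refine IsBigO.congr' ?_ (hfφ.mono fun z hz => hz.symm) EventuallyEq.rfl
  simpa using (isBigO_refl (fun z => (z - z₀) ^ n) _).mul (hφ.continuousAt.isBigO_one 𝕜)

theorem AnalyticAt.natCast_le_analyticOrderAt_of_isBigO (hf : AnalyticAt 𝕜 f z₀)
    {l : Filter 𝕜} [l.NeBot] (hl : l ≤ 𝓝[≠] z₀) (hO : f =O[l] fun z => (z - z₀) ^ n) :
    n ≤ analyticOrderAt f z₀ := by
  have hl₀ : l ≤ 𝓝 z₀ := hl.trans nhdsWithin_le_nhds
  by_contra! hlt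
  obtain ⟨m, hm⟩ := ENat.ne_top_iff_exists.mp hlt.ne_top
  rw [← hm, Nat.cast_lt] at hlt
  obtain ⟨φ, hφ, hφ0, hfφ⟩ := hf.analyticOrderAt_eq_natCast.mp hm.symm
  have hne : ∀ᶠ z in l, (z - z₀) ^ m ≠ 0 :=
    hl (eventually_mem_nhdsWithin.mono fun z hz => pow_ne_zero _ (sub_ne_zero.mpr hz))
  have hφO : φ =O[l] fun z => (z - z₀) ^ (n - m) := by
    refine ((isBigO_mul_iff_isBigO_div hne).mp
      (hO.congr' ((hfφ.filter_mono hl₀).mono fun z hz => hz) EventuallyEq.rfl)).congr'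
      EventuallyEq.rfl (hne.mono fun z hz => ?_)
    rw [div_eq_iff hz, ← pow_add, Nat.sub_add_cancel hlt.le]
  have hφ_lim : Tendsto φ l (𝓝 0) := by
    refine hφO.trans_tendsto (Tendsto.mono_left ?_ hl₀)
    have : Continuous fun z => (z - z₀) ^ (n - m) := by fun_prop
    simpa [zero_pow (Nat.sub_ne_zero_of_lt hlt)] using this.tendsto z₀
  exact hφ0 (tendsto_nhds_unique (hφ.continuousAt.tendsto.mono_left hl₀) hφ_lim)

theorem AnalyticAt.existsUnique_natCast_add_one_le_analyticOrderAt_add_smul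
    (hf : AnalyticAt 𝕜 f z₀) (hg : AnalyticAt 𝕜 g z₀) (hfm : m ≤ analyticOrderAt f z₀)
    (hgm : analyticOrderAt g z₀ = m) :
    ∃! β : 𝕜, ((m + 1 : ℕ) : ℕ∞) ≤ analyticOrderAt (f + β • g) z₀ := by
  obtain ⟨φ, hφ, hfφ⟩ := (natCast_le_analyticOrderAt hf).mp hfm
  obtain ⟨ψ, hψ, hψ0, hgψ⟩ := hg.analyticOrderAt_eq_natCast.mp hgm
  have horder (β : 𝕜) :
      analyticOrderAt (f + β • g) z₀ = m + analyticOrderAt (φ + β • ψ) z₀ := by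
    have hfactor : f + β • g =ᶠ[𝓝 z₀] (· - z₀) ^ m * (φ + β • ψ) := by
      filter_upwards [hfφ, hgψ] with z hfz hgz
      simp only [Pi.add_apply, Pi.smul_apply, Pi.mul_apply, Pi.pow_apply, hfz, hgz, smul_eq_mul]
      ring
    have hφψ : AnalyticAt 𝕜 (φ + β • ψ) z₀ := hφ.add (hψ.const_smul (c := β))
    rw [analyticOrderAt_congr hfactor, analyticOrderAt_mul (by fun_prop) hφψ,
      analyticOrderAt_centeredMonomial]
  have hcancel (β : 𝕜) :
      ((m + 1 : ℕ) : ℕ∞) ≤ analyticOrderAt (f + β • g) z₀ ↔ β = -φ z₀ / ψ z₀ := by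
    rw [horder, Nat.cast_add, Nat.cast_one, ENat.add_le_add_iff_left (ENat.natCast_ne_top m),
      Order.one_le_iff_ne_zero, (hφ.add (hψ.const_smul (c := β))).analyticOrderAt_ne_zero,
      eq_div_iff hψ0]
    simp only [Pi.add_apply, Pi.smul_apply, smul_eq_mul]
    constructor <;> intro h <;> linear_combination h
  exact ⟨-φ z₀ / ψ z₀, (hcancel _).mpr rfl, fun β hβ => (hcancel β).mp hβ⟩

theorem AnalyticAt.two_le_analyticOrderAt [CharZero 𝕜] [CompleteSpace 𝕜]
    (hf : AnalyticAt 𝕜 f z₀) (hf0 : f z₀ = 0) (hf1 : deriv f z₀ = 0) :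
    2 ≤ analyticOrderAt f z₀ := by
  have := (natCast_le_analyticOrderAt_iff_iteratedDeriv_eq_zero (n := 2) hf).mpr fun i hi => by
    interval_cases i <;> simpa
  exact_mod_cast this

end AnalyticOrder

section Triangular

variable {𝕜 : Type*} [NontriviallyNormedField 𝕜] {z₀ : 𝕜} {h : 𝕜 → 𝕜} {v : ℕ → 𝕜 → 𝕜}

def correctedSum (h : 𝕜 → 𝕜) (v : ℕ → 𝕜 → 𝕜) (b : ℕ → 𝕜) (n : ℕ) : 𝕜 → 𝕜 :=
  fun z => h z + ∑ j ∈ Icc 1 n, b j * v j z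

theorem correctedSum_zero (b : ℕ → 𝕜) : correctedSum h v b 0 = h := by
  ext z; simp [correctedSum]

theorem correctedSum_succ (b : ℕ → 𝕜) (n : ℕ) :
    correctedSum h v b (n + 1) = correctedSum h v b n + b (n + 1) • v (n + 1) := by
  ext z
  simp only [correctedSum, Pi.add_apply, Pi.smul_apply, smul_eq_mul,
    sum_Icc_succ_top (Nat.le_add_left 1 n), add_assoc]

theorem correctedSum_congr {b b' : ℕ → 𝕜} {n : ℕ} (hbb' : ∀ j ≤ n, b j = b' j) :
    correctedSum h v b n = correctedSum h v b' n := by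
  ext z
  simp only [correctedSum]
  congr 1
  exact sum_congr rfl fun j hj => by rw [hbb' j (mem_Icc.mp hj).2]

theorem analyticAt_correctedSum (hh : AnalyticAt 𝕜 h z₀) (hv : ∀ j, AnalyticAt 𝕜 (v j) z₀)
    (b : ℕ → 𝕜) (n : ℕ) : AnalyticAt 𝕜 (correctedSum h v b n) z₀ := by
  unfold correctedSum
  fun_prop

theorem existsUnique_add_smul_of_natCast_le_analyticOrderAt
    (hv : ∀ j, AnalyticAt 𝕜 (v j) z₀) (hvj : ∀ j, analyticOrderAt (v (j + 1)) z₀ = j + 2)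
    {n : ℕ} {f : 𝕜 → 𝕜} (hf : AnalyticAt 𝕜 f z₀)
    (hfn : ((n + 2 : ℕ) : ℕ∞) ≤ analyticOrderAt f z₀) :
    ∃! β : 𝕜, ((n + 1 + 2 : ℕ) : ℕ∞) ≤ analyticOrderAt (f + β • v (n + 1)) z₀ :=
  hf.existsUnique_natCast_add_one_le_analyticOrderAt_add_smul (hv (n + 1)) hfn
    (by exact_mod_cast hvj n)

theorem exists_natCast_le_analyticOrderAt_correctedSum (hh : AnalyticAt 𝕜 h z₀)
    (hh2 : 2 ≤ analyticOrderAt h z₀) (hv : ∀ j, AnalyticAt 𝕜 (v j) z₀)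
    (hvj : ∀ j, analyticOrderAt (v (j + 1)) z₀ = j + 2) :
    ∃ b : ℕ → 𝕜, b 0 = 0 ∧
      ∀ n, ((n + 2 : ℕ) : ℕ∞) ≤ analyticOrderAt (correctedSum h v b n) z₀ := by
  have hchoice (n : ℕ) (f : 𝕜 → 𝕜) : ∃ β : 𝕜, AnalyticAt 𝕜 f z₀ →
      ((n + 2 : ℕ) : ℕ∞) ≤ analyticOrderAt f z₀ →
      ((n + 1 + 2 : ℕ) : ℕ∞) ≤ analyticOrderAt (f + β • v (n + 1)) z₀ := by
    by_cases hf : AnalyticAt 𝕜 f z₀ ∧ ((n + 2 : ℕ) : ℕ∞) ≤ analyticOrderAt f z₀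
    · exact (existsUnique_add_smul_of_natCast_le_analyticOrderAt hv hvj hf.1 hf.2).exists.imp
        fun β hβ _ _ => hβ
    · exact ⟨0, fun h1 h2 => (hf ⟨h1, h2⟩).elim⟩
  choose β hβ using hchoice
  -- greedy construction: `b (k + 1)` cancels the leading term of the partial sum `P k`
  let P : ℕ → 𝕜 → 𝕜 := fun n => Nat.rec (motive := fun _ => 𝕜 → 𝕜) h
    (fun k f => f + β k f • v (k + 1)) n
  let b : ℕ → 𝕜 := fun j => Nat.casesOn j 0 fun k => β k (P k)
  have hP (n : ℕ) : P n = correctedSum h v b n := by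
    induction n with
    | zero => exact (correctedSum_zero b).symm
    | succ n ih => rw [correctedSum_succ, ← ih]
  refine ⟨b, rfl, fun n => ?_⟩
  rw [← hP]
  induction n with
  | zero => exact hh2
  | succ n ih => exact hβ n (P n) (hP n ▸ analyticAt_correctedSum hh hv b n) ih

theorem eq_of_natCast_le_analyticOrderAt_correctedSum (hh : AnalyticAt 𝕜 h z₀)
    (hv : ∀ j, AnalyticAt 𝕜 (v j) z₀) (hvj : ∀ j, analyticOrderAt (v (j + 1)) z₀ = j + 2)
    {b b' : ℕ → 𝕜} (hb0 : b 0 = b' 0)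
    (hb : ∀ n, ((n + 2 : ℕ) : ℕ∞) ≤ analyticOrderAt (correctedSum h v b n) z₀)
    (hb' : ∀ n, ((n + 2 : ℕ) : ℕ∞) ≤ analyticOrderAt (correctedSum h v b' n) z₀) :
    b = b' := by
  suffices ∀ n, ∀ j ≤ n, b j = b' j from funext fun j => this j j le_rfl
  intro n
  induction n with
  | zero => intro j hj; rwa [Nat.le_zero.mp hj]
  | succ n ih =>
    intro j hj
    rcases hj.lt_or_eq with hj | rfl
    · exact ih j (Nat.lt_succ_iff.mp hj)
    · refine (existsUnique_add_smul_of_natCast_le_analyticOrderAt hv hvj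
        (analyticAt_correctedSum hh hv b n) (hb n)).unique ?_ ?_
      · rw [← correctedSum_succ]; exact hb (n + 1)
      · rw [correctedSum_congr ih, ← correctedSum_succ]; exact hb' (n + 1)

theorem existsUnique_natCast_le_analyticOrderAt_correctedSum (hh : AnalyticAt 𝕜 h z₀)
    (hh2 : 2 ≤ analyticOrderAt h z₀) (hv : ∀ j, AnalyticAt 𝕜 (v j) z₀)
    (hvj : ∀ j, analyticOrderAt (v (j + 1)) z₀ = j + 2) :
    ∃! b : ℕ → 𝕜, b 0 = 0 ∧
      ∀ n, ((n + 2 : ℕ) : ℕ∞) ≤ analyticOrderAt (correctedSum h v b n) z₀ :=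
  existsUnique_of_exists_of_unique (exists_natCast_le_analyticOrderAt_correctedSum hh hh2 hv hvj)
    fun _ _ ⟨hb0, hb⟩ ⟨hb'0, hb'⟩ =>
      eq_of_natCast_le_analyticOrderAt_correctedSum hh hv hvj (hb0.trans hb'0.symm) hb hb'

end Triangular

theorem Complex.comap_re_atTop_le_cobounded : comap re atTop ≤ cobounded ℂ :=
  tendsto_norm_atTop_iff_cobounded.mp (tendsto_atTop_mono re_le_norm tendsto_comap)

instance Complex.comap_re_atTop_neBot : (comap re atTop).NeBot :=
  atTop_neBot.comap_of_surj re_surjective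

theorem Complex.tendsto_inv_comap_re_atTop : Tendsto (·⁻¹) (comap re atTop) (𝓝[≠] (0 : ℂ)) :=
  tendsto_inv₀_cobounded'.comp comap_re_atTop_le_cobounded

theorem Complex.exists_bound_iff_isBigO_comap_re_atTop {E : ℂ → ℂ} {n : ℕ} :
    (∃ C R : ℝ, ∀ w : ℂ, R < w.re → ‖E w‖ ≤ C / ‖w‖ ^ n) ↔
      E =O[comap re atTop] fun w => w⁻¹ ^ n := by
  simp only [isBigO_iff, (atTop_basis_Ioi.comap re).eventually_iff, true_and, norm_pow,
    norm_inv, inv_pow, ← div_eq_mul_inv]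
  rfl

theorem AnalyticAt.isBigO_comp_inv_iff {f : ℂ → ℂ} (hf : AnalyticAt ℂ f 0) {n : ℕ} :
    (fun w => f w⁻¹) =O[comap re atTop] (fun w => w⁻¹ ^ n) ↔ n ≤ analyticOrderAt f 0 := by
  constructor
  · intro hO
    refine hf.natCast_le_analyticOrderAt_of_isBigO (l := map (·⁻¹) (comap re atTop))
      tendsto_inv_comap_re_atTop (isBigO_map.mpr ?_)
    simpa [Function.comp_def] using hO
  · intro hn
    simpa [Function.comp_def] using
      (hf.isBigO_sub_pow_of_natCast_le_analyticOrderAt hn).comp_tendsto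
        (tendsto_inv_comap_re_atTop.mono_right nhdsWithin_le_nhds)

theorem FormalMultilinearSeries.hasFPowerSeriesAt_ofScalarsSum {𝕜 : Type*}
    [NontriviallyNormedField 𝕜] [CompleteSpace 𝕜] {a : ℕ → 𝕜} {z : 𝕜} (hz : z ≠ 0)
    (ha : Summable fun k => a k * z ^ k) :
    HasFPowerSeriesAt (ofScalarsSum a) (ofScalars 𝕜 a) 0 := by
  have hr : (‖z‖₊ : ENNReal) ≤ (ofScalars 𝕜 a).radius := by
    refine (ofScalars 𝕜 a).le_radius_of_tendsto (l := 0) ?_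
    simpa [ofScalars_norm] using ha.tendsto_atTop_zero.norm
  exact ((ofScalars 𝕜 a).hasFPowerSeriesOnBall
    ((ENNReal.coe_pos.mpr (nnnorm_pos.mpr hz)).trans_le hr)).hasFPowerSeriesAt

theorem AnalyticAt.analyticOrderAt_pow_mul_inv_pow_sub_one {𝕜 : Type*}
    [NontriviallyNormedField 𝕜] [CharZero 𝕜] {u : 𝕜 → 𝕜} {c : 𝕜} (hu : AnalyticAt 𝕜 u 0)
    (hu0 : u 0 = 1) (hu' : HasDerivAt u c 0) (hc : c ≠ 0) (j : ℕ) :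
    analyticOrderAt (fun z => z ^ (j + 1) * ((u z)⁻¹ ^ (j + 1) - 1)) 0 = j + 2 := by
  have hq : AnalyticAt 𝕜 (fun z => (u z)⁻¹ ^ (j + 1) - 1) 0 :=
    ((hu.inv (by simp [hu0])).pow (j + 1)).sub analyticAt_const
  have hq' : HasDerivAt (fun z => (u z)⁻¹ ^ (j + 1) - 1) (-((j + 1 : ℕ) * c)) 0 := by
    refine (((hu'.inv (by simp [hu0])).pow (j + 1)).sub_const 1).congr_deriv ?_
    simp only [Pi.inv_apply, hu0, inv_one, one_pow]
    push_cast; ring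
  have hq1 : analyticOrderAt (fun z => (u z)⁻¹ ^ (j + 1) - 1) 0 = 1 :=
    hq.analyticOrderAt_eq_one_of_zero_deriv_ne_zero (by simp [hu0])
      (by rw [hq'.deriv]; simp [hc]; exact_mod_cast Nat.succ_ne_zero j)
  have hsplit : (fun z => z ^ (j + 1) * ((u z)⁻¹ ^ (j + 1) - 1)) =
      (· - 0) ^ (j + 1) * fun z => (u z)⁻¹ ^ (j + 1) - 1 := by
    ext z; simp
  rw [hsplit, analyticOrderAt_mul (by fun_prop) hq, analyticOrderAt_centeredMonomial, hq1]
  push_cast; ring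

theorem Complex.log_mul_of_re_pos {x y : ℂ} (hx : 0 < x.re) (hy : 0 < y.re) :
    log (x * y) = log x + log y := by
  have hx' := abs_lt.mp (abs_arg_lt_pi_div_two_iff.mpr (Or.inl hx))
  have hy' := abs_lt.mp (abs_arg_lt_pi_div_two_iff.mpr (Or.inl hy))
  exact log_mul (ne_of_apply_ne re (by simpa using hx.ne'))
    (ne_of_apply_ne re (by simpa using hy.ne')) ⟨by linarith, by linarith⟩

theorem Complex.two_le_analyticOrderAt_sub_mul_log {g u : ℂ → ℂ} {A : ℂ}
    (hg : AnalyticAt ℂ g 0) (hg0 : g 0 = 0) (hg' : HasDerivAt g A 0)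
    (hu : AnalyticAt ℂ u 0) (hu0 : u 0 = 1) (hu' : HasDerivAt u 1 0) :
    2 ≤ analyticOrderAt (fun z => g z - A * log (u z)) 0 := by
  have hslit : u 0 ∈ slitPlane := by simp [hu0]
  have hd : HasDerivAt (fun z => g z - A * log (u z)) (A - A * ((u 0)⁻¹ * 1)) 0 :=
    hg'.sub (((hasDerivAt_log hslit).comp 0 hu').const_mul A)
  have ha : AnalyticAt ℂ (fun z => g z - A * log (u z)) 0 :=
    hg.sub (analyticAt_const.mul ((analyticAt_clog hslit).comp hu))
  refine ha.two_le_analyticOrderAt (by simp [hg0, hu0]) ?_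
  rw [hd.deriv, hu0]; simp

noncomputable def truncatedFatouCoord (A : ℂ) (b : ℕ → ℂ) (n : ℕ) (w : ℂ) : ℂ :=
  w - A * log w + ∑ j ∈ Icc 1 n, b j * w⁻¹ ^ j

theorem truncatedFatouCoord_mul_sub (A : ℂ) (b : ℕ → ℂ) (n : ℕ) {w u : ℂ} (hw : 0 < w.re)
    (hu : 0 < u.re) :
    truncatedFatouCoord A b n (w * u) - truncatedFatouCoord A b n w - 1 =
      (w * u - w - 1) - A * log u + ∑ j ∈ Icc 1 n, b j * (w⁻¹ ^ j * (u⁻¹ ^ j - 1)) := by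
  have hsum : ∑ j ∈ Icc 1 n, b j * (w * u)⁻¹ ^ j - ∑ j ∈ Icc 1 n, b j * w⁻¹ ^ j =
      ∑ j ∈ Icc 1 n, b j * (w⁻¹ ^ j * (u⁻¹ ^ j - 1)) := by
    rw [← sum_sub_distrib]
    exact sum_congr rfl fun j _ => by rw [mul_inv, mul_pow]; ring
  rw [truncatedFatouCoord, truncatedFatouCoord, log_mul_of_re_pos hw hu, ← hsum]
  ring

theorem existsUnique_isBigO_truncatedFatouCoord {F g : ℂ → ℂ} {A : ℂ}
    (hg : AnalyticAt ℂ g 0) (hg0 : g 0 = 0) (hg' : HasDerivAt g A 0)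
    (hgF : ∀ᶠ w in comap re atTop, F w = w + 1 + g w⁻¹) :
    ∃! b : ℕ → ℂ, b 0 = 0 ∧ ∀ n,
      (fun w => truncatedFatouCoord A b n (F w) - truncatedFatouCoord A b n w - 1)
        =O[comap re atTop] fun w => w⁻¹ ^ (n + 2) := by
  set u : ℂ → ℂ := fun z => 1 + z + z * g z
  have hu : AnalyticAt ℂ u 0 := by fun_prop
  have hu0 : u 0 = 1 := by simp [u, hg0]
  have hu' : HasDerivAt u 1 0 :=
    (((hasDerivAt_id' 0).const_add 1).add ((hasDerivAt_id' 0).mul hg')).congr_deriv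
      (by simp [hg0])
  set h : ℂ → ℂ := fun z => g z - A * log (u z)
  set v : ℕ → ℂ → ℂ := fun j z => z ^ j * ((u z)⁻¹ ^ j - 1)
  have hh : AnalyticAt ℂ h 0 :=
    hg.sub (analyticAt_const.mul ((analyticAt_clog (by simp [hu0])).comp hu))
  have hv (j : ℕ) : AnalyticAt ℂ (v j) 0 :=
    (analyticAt_id.pow j).mul (((hu.inv (by simp [hu0])).pow j).sub analyticAt_const)
  have hu_re : ∀ᶠ w in comap re atTop, 0 < (u w⁻¹).re := by
    have : Tendsto (fun w : ℂ => (u w⁻¹).re) (comap re atTop) (𝓝 (u 0).re) :=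
      (continuous_re.tendsto _).comp
        (hu.continuousAt.tendsto.comp (tendsto_inv_comap_re_atTop.mono_right nhdsWithin_le_nhds))
    exact this.eventually_const_lt (by simp [hu0])
  have hdefect (b : ℕ → ℂ) (n : ℕ) :
      (fun w => truncatedFatouCoord A b n (F w) - truncatedFatouCoord A b n w - 1)
        =ᶠ[comap re atTop] fun w => correctedSum h v b n w⁻¹ := by
    filter_upwards [hgF, hu_re, tendsto_comap.eventually (eventually_gt_atTop 0)]
      with w hFw hu hw
    have hw0 : w ≠ 0 := ne_of_apply_ne re (by simpa using hw.ne')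
    have hFu : F w = w * u w⁻¹ := by rw [hFw]; simp only [u]; field_simp
    rw [hFu, truncatedFatouCoord_mul_sub A b n hw hu, correctedSum, ← hFu, hFw]
    ring
  refine (existsUnique_congr fun b => and_congr_right fun _ => forall_congr' fun n => ?_).mpr
    (existsUnique_natCast_le_analyticOrderAt_correctedSum hh
      (two_le_analyticOrderAt_sub_mul_log hg hg0 hg' hu hu0 hu') hv
      (hu.analyticOrderAt_pow_mul_inv_pow_sub_one hu0 hu' one_ne_zero))
  rw [isBigO_congr (hdefect b n) EventuallyEq.rfl,
    (analyticAt_correctedSum hh hv b n).isBigO_comp_inv_iff]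

/-- Formal Fatou coordinate at infinity.  Let `F(w) = w + 1 + A/w + O(1/w²)` be
analytic at `∞` (given by a convergent series `F(w) - w - 1 = Σ aₖ w^{-k}` with
`a₀ = 0`, `a₁ = A`).  Then there is a unique sequence `b₁, b₂, …` such that for
every `n ≥ 1` the truncation `Φₙ(w) = w - A log w + Σ_{j=1}^n bⱼ w^{-j}`
satisfies `Φₙ(F(w)) - Φₙ(w) - 1 = O(w^{-(n+2)})` as `w → ∞` in a right
half-plane. -/
theorem stmt14 (F : ℂ → ℂ) (A : ℂ) (a : ℕ → ℂ) (r : ℝ)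
    (ha0 : a 0 = 0) (ha1 : a 1 = A)
    (hF : ∀ w : ℂ, r < ‖w‖ →
      HasSum (fun k => a k * (w⁻¹) ^ k) (F w - w - 1)) :
    ∃! b : ℕ → ℂ, b 0 = 0 ∧
      ∀ n : ℕ, 1 ≤ n → ∃ C R : ℝ, ∀ w : ℂ, R < w.re →
        ‖
          ((F w - A * Complex.log (F w) + ∑ j ∈ Finset.Icc 1 n, b j * ((F w)⁻¹) ^ j)
            - (w - A * Complex.log w + ∑ j ∈ Finset.Icc 1 n, b j * (w⁻¹) ^ j) - 1)‖
          ≤ C / ‖w‖ ^ (n + 2) := by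
  set g := ofScalarsSum (E := ℂ) a
  have hw₀ : r < ‖((|r| + 1 : ℝ) : ℂ)‖ := by
    rw [norm_real, Real.norm_of_nonneg (by positivity)]; linarith [le_abs_self r]
  have hw₀' : ((|r| + 1 : ℝ) : ℂ) ≠ 0 := ofReal_ne_zero.mpr (by positivity)
  have hg : HasFPowerSeriesAt g (ofScalars ℂ a) 0 :=
    hasFPowerSeriesAt_ofScalarsSum (inv_ne_zero hw₀') (hF _ hw₀).summable
  have hgF : ∀ᶠ w in comap re atTop, F w = w + 1 + g w⁻¹ := by
    filter_upwards [tendsto_comap.eventually (eventually_gt_atTop r)] with w hw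
    have := (hF w (hw.trans_le (re_le_norm w))).tsum_eq
    simp only [g, ofScalars_sum_eq, smul_eq_mul, this]; ring
  have hg' : HasDerivAt g A 0 := by
    simpa [ofScalars_apply_eq, ha1] using hg.hasDerivAt
  obtain ⟨b, ⟨hb0, hb⟩, huniq⟩ := existsUnique_isBigO_truncatedFatouCoord hg.analyticAt
    (by simp [g, ha0]) hg' hgF
  refine ⟨b, ⟨hb0, fun n _ => exists_bound_iff_isBigO_comap_re_atTop.mpr (hb n)⟩,
    fun b' ⟨hb'0, hb'⟩ => huniq b' ⟨hb'0, fun n => ?_⟩⟩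
  rcases Nat.eq_zero_or_pos n with rfl | hn
  · -- `Φ₀` does not involve the coefficients
    simpa [truncatedFatouCoord] using hb 0
  · exact exists_bound_iff_isBigO_comap_re_atTop.mp (hb' n hn)
end

section
/- Let f₀(z) = z + z² and let 𝔸_{i₀…i_{n-1}} denote the puzzle pieces: 𝔸₀ and 𝔸₁ are the intersections of 𝔸 = {1/2 < |z+1/2| < 2} with the open upper and lower half-planes, and 𝔸_{i₀…i_{n-1}} = { z ∈ 𝔸_{i₀} : f₀ʲ(z) ∈ 𝔸_{i_j} for 1 ≤ j < n }. Then for any two finite binary strings i, i' of equal length n whose closed puzzle pieces intersect, the associated dyadic numbers b(i) = Σ i_j 2^{-(j+1)} and b(i') satisfy b(i) = b(i') or b(i) = b(i') ± 2^{-n} (mod 1). -/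
/-!
Since `Im f₀(z) = Im z · (1 + 2 Re z)`, an orbit staying off the real line keeps its half-plane
at each step where `Re > -1/2` and switches it where `Re < -1/2`; this passes to the closures of
the pieces wherever `Re ≠ -1/2`. Two itineraries whose closed pieces meet at `z` can only part
ways at a step `k` where `f₀ᵏ(z)` is real. A real point of the closed annulus lies in `(-∞, -1]`
or `[0, ∞)`, and `[0, ∞)` is invariant. If `f₀ᵏ(z) ≤ -1`, both itineraries switch once after `k`
and are then constant, which makes their dyadic numbers differ by exactly `±2⁻ⁿ`. If
`f₀ᵏ(z) ≥ 0`, then `k = 0` (a non-real preimage of a real point has real part `-1/2` and maps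
below `-1/4`), both itineraries are constant, and the difference is `±(1 - 2⁻ⁿ)`.
-/

open Finset Set

namespace QuadraticPuzzle

noncomputable def f (z : ℂ) : ℂ := z + z ^ 2

def A (b : Bool) : Set ℂ :=
  {z : ℂ | 1/2 < ‖z + 1/2‖ ∧ ‖z + 1/2‖ < 2 ∧ (if b then z.im < 0 else 0 < z.im)}

def closedA (b : Bool) : Set ℂ :=
  {z : ℂ | 1/2 ≤ ‖z + 1/2‖ ∧ ‖z + 1/2‖ ≤ 2 ∧ (if b then z.im ≤ 0 else 0 ≤ z.im)}

def piece (n : ℕ) (s : ℕ → Bool) : Set ℂ := {z : ℂ | ∀ j < n, f^[j] z ∈ A (s j)}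

def realNonneg : Set ℂ := {z : ℂ | z.im = 0 ∧ 0 ≤ z.re}

lemma continuous_f : Continuous f := by
  unfold f; fun_prop

lemma f_im (z : ℂ) : (f z).im = z.im * (1 + 2 * z.re) := by
  simp only [f, pow_two, Complex.add_im, Complex.mul_im]; ring

lemma f_re (z : ℂ) : (f z).re = z.re + z.re ^ 2 - z.im ^ 2 := by
  simp only [f, pow_two, Complex.add_re, Complex.mul_re]; ring

lemma isClosed_closedA (b : Bool) : IsClosed (closedA b) := by
  have hnorm : Continuous fun z : ℂ => ‖z + 1/2‖ := by fun_prop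
  refine (isClosed_le continuous_const hnorm).inter ((isClosed_le hnorm continuous_const).inter ?_)
  cases b
  · exact isClosed_le continuous_const Complex.continuous_im
  · exact isClosed_le Complex.continuous_im continuous_const

lemma closure_A_subset (b : Bool) : closure (A b) ⊆ closedA b :=
  closure_minimal (fun _ hz => by cases b <;> exact ⟨hz.1.le, hz.2.1.le, hz.2.2.le⟩)
    (isClosed_closedA b)

lemma iterate_mem_closedA {z : ℂ} {n j : ℕ} {s : ℕ → Bool} (hz : z ∈ closure (piece n s))
    (hj : j < n) : f^[j] z ∈ closedA (s j) :=
  closure_A_subset _ (map_mem_closure (continuous_f.iterate j) hz fun _ hw => hw j hj)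

lemma im_eq_zero_of_mem_closedA {z : ℂ} {b b' : Bool} (hb : z ∈ closedA b) (hb' : z ∈ closedA b')
    (hne : b ≠ b') : z.im = 0 := by
  have h := hb.2.2
  have h' := hb'.2.2
  cases b <;> cases b' <;> simp only [ne_eq, not_true_eq_false] at hne <;>
    simp only [Bool.false_eq_true, if_true, if_false] at h h' <;> linarith

lemma re_le_neg_one_or_nonneg {z : ℂ} {b : Bool} (hz : z ∈ closedA b) (him : z.im = 0) :
    z.re ≤ -1 ∨ 0 ≤ z.re := by
  have hnorm : ‖z + 1/2‖ = |z.re + 1/2| := by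
    rw [show z + 1/2 = ((z.re + 1/2 : ℝ) : ℂ) by apply Complex.ext <;> simp [him],
      Complex.norm_real, Real.norm_eq_abs]
  have h := hz.1
  rw [hnorm] at h
  rcases le_abs'.mp h with h | h
  · left; linarith
  · right; linarith

lemma eq_of_mem_A_of_re_gt {u : ℂ} {b b' : Bool} (hu : u ∈ A b) (hfu : f u ∈ A b')
    (hre : -(1/2) < u.re) : b' = b := by
  have h := hu.2.2
  have h' := hfu.2.2
  rw [f_im] at h'
  have hpos : 0 < 1 + 2 * u.re := by linarith
  cases b <;> cases b' <;> simp only [Bool.false_eq_true, if_true, if_false] at h h' <;>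
    first | rfl | nlinarith

lemma eq_not_of_mem_A_of_re_lt {u : ℂ} {b b' : Bool} (hu : u ∈ A b) (hfu : f u ∈ A b')
    (hre : u.re < -(1/2)) : b' = !b := by
  have h := hu.2.2
  have h' := hfu.2.2
  rw [f_im] at h'
  have hneg : 1 + 2 * u.re < 0 := by linarith
  cases b <;> cases b' <;> simp only [Bool.false_eq_true, if_true, if_false] at h h' <;>
    first | rfl | nlinarith

lemma itinerary_succ_of_re_gt {z : ℂ} {m j : ℕ} {s : ℕ → Bool} (hz : z ∈ closure (piece m s))
    (hj : j + 1 < m) (hre : -(1/2) < (f^[j] z).re) : s (j + 1) = s j := by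
  have hopen : IsOpen {w : ℂ | -(1/2) < (f^[j] w).re} :=
    isOpen_lt continuous_const (Complex.continuous_re.comp (continuous_f.iterate j))
  obtain ⟨w, hw_re, hw⟩ := mem_closure_iff.1 hz _ hopen hre
  refine eq_of_mem_A_of_re_gt (hw j (by omega)) ?_ hw_re
  simpa only [Function.iterate_succ_apply'] using hw (j + 1) hj

lemma itinerary_succ_of_re_lt {z : ℂ} {m j : ℕ} {s : ℕ → Bool} (hz : z ∈ closure (piece m s))
    (hj : j + 1 < m) (hre : (f^[j] z).re < -(1/2)) : s (j + 1) = !s j := by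
  have hopen : IsOpen {w : ℂ | (f^[j] w).re < -(1/2)} :=
    isOpen_lt (Complex.continuous_re.comp (continuous_f.iterate j)) continuous_const
  obtain ⟨w, hw_re, hw⟩ := mem_closure_iff.1 hz _ hopen hre
  refine eq_not_of_mem_A_of_re_lt (hw j (by omega)) ?_ hw_re
  simpa only [Function.iterate_succ_apply'] using hw (j + 1) hj

lemma itinerary_succ_eq {z : ℂ} {n j : ℕ} {i i' : ℕ → Bool} (hz : z ∈ closure (piece n i))
    (hz' : z ∈ closure (piece n i')) (hj : j + 1 < n) (h : i j = i' j)
    (hre : (f^[j] z).re ≠ -(1/2)) : i (j + 1) = i' (j + 1) := by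
  rcases hre.lt_or_gt with hlt | hgt
  · rw [itinerary_succ_of_re_lt hz hj hlt, itinerary_succ_of_re_lt hz' hj hlt, h]
  · rw [itinerary_succ_of_re_gt hz hj hgt, itinerary_succ_of_re_gt hz' hj hgt, h]

lemma mapsTo_f_realNonneg : MapsTo f realNonneg realNonneg := fun z ⟨him, hre⟩ =>
  ⟨by rw [f_im, him, zero_mul], by rw [f_re, him]; nlinarith⟩

lemma f_mem_realNonneg_of_re_le_neg_one {z : ℂ} (him : z.im = 0) (hre : z.re ≤ -1) :
    f z ∈ realNonneg :=
  ⟨by rw [f_im, him, zero_mul], by rw [f_re, him]; nlinarith⟩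

lemma f_re_neg_of_re_eq {z : ℂ} (hre : z.re = -(1/2)) : (f z).re < 0 := by
  rw [f_re, hre]; nlinarith [sq_nonneg z.im]

lemma itinerary_const_of_mem_realNonneg {z : ℂ} {n k : ℕ} {s : ℕ → Bool}
    (hz : z ∈ closure (piece n s)) (hk : f^[k] z ∈ realNonneg) :
    ∀ j, k ≤ j → j < n → s j = s k := by
  intro j hkj
  induction j, hkj using Nat.le_induction with
  | base => exact fun _ => rfl
  | succ j hkj ih =>
    intro hj
    have hS : f^[j] z ∈ realNonneg := by
      simpa only [← Function.iterate_add_apply, Nat.sub_add_cancel hkj]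
        using mapsTo_f_realNonneg.iterate (j - k) hk
    rw [itinerary_succ_of_re_gt hz hj (by linarith [hS.2]), ih (by omega)]

theorem itineraries_of_mem_closure_inter {z : ℂ} {n : ℕ} {i i' : ℕ → Bool}
    (hz : z ∈ closure (piece n i)) (hz' : z ∈ closure (piece n i')) :
    (∀ j < n, i j = i' j) ∨
    (∃ k < n, (∀ j < k, i j = i' j) ∧ ∀ j, k < j → j < n → i j = !i k ∧ i' j = !i' k) ∨
    (∀ j < n, i j = i 0 ∧ i' j = i' 0) := by
  by_cases hall : ∀ j < n, i j = i' j
  · exact Or.inl hall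
  push Not at hall
  obtain ⟨k, ⟨hk, hne⟩, hbelow⟩ : ∃ k, (k < n ∧ i k ≠ i' k) ∧ ∀ j < k, i j = i' j := by
    refine ⟨Nat.find hall, Nat.find_spec hall, fun j hj => ?_⟩
    have := Nat.find_min hall hj
    push Not at this
    exact this (hj.trans (Nat.find_spec hall).1)
  have hw := iterate_mem_closedA hz hk
  have him := im_eq_zero_of_mem_closedA hw (iterate_mem_closedA hz' hk) hne
  rcases re_le_neg_one_or_nonneg hw him with hle | hnonneg
  · have hS : f^[k + 1] z ∈ realNonneg := by
      rw [Function.iterate_succ_apply']; exact f_mem_realNonneg_of_re_le_neg_one him hle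
    have hflip {s : ℕ → Bool} (hs : z ∈ closure (piece n s)) {j : ℕ} (hkj : k < j) (hjn : j < n) :
        s j = !s k := by
      rw [itinerary_const_of_mem_realNonneg hs hS j hkj hjn,
        itinerary_succ_of_re_lt hs (by omega) (by linarith)]
    exact Or.inr (Or.inl ⟨k, hk, hbelow, fun j hkj hjn => ⟨hflip hz hkj hjn, hflip hz' hkj hjn⟩⟩)
  · rcases k with _ | k
    · have hS : f^[0] z ∈ realNonneg := ⟨him, hnonneg⟩
      exact Or.inr (Or.inr fun j hj =>
        ⟨itinerary_const_of_mem_realNonneg hz hS j (Nat.zero_le j) hj,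
          itinerary_const_of_mem_realNonneg hz' hS j (Nat.zero_le j) hj⟩)
    · refine absurd (itinerary_succ_eq hz hz' hk (hbelow k (by omega)) fun hre => ?_) hne
      have := f_re_neg_of_re_eq hre
      rw [← Function.iterate_succ_apply' f] at this
      linarith

lemma sum_div_two_pow_of_flip {d : ℕ → ℝ} {k n : ℕ} (hk : k < n) (hbelow : ∀ j < k, d j = 0)
    (hflip : ∀ j, k < j → j < n → d j = -d k) :
    ∑ j ∈ range n, d j / 2 ^ (j + 1) = d k * (1/2) ^ n := by
  induction n, hk using Nat.le_induction with
  | base =>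
    rw [sum_range_succ, sum_eq_zero fun j hj => by rw [hbelow j (mem_range.1 hj), zero_div]]
    simp only [one_div, inv_pow, Nat.succ_eq_add_one]
    ring
  | succ n hkn ih =>
    rw [sum_range_succ, ih fun j hkj hjn => hflip j hkj (by omega), hflip n hkn (by omega)]
    simp only [one_div, inv_pow]
    ring

lemma sum_div_two_pow_of_const {d : ℕ → ℝ} {c : ℝ} {n : ℕ} (h : ∀ j < n, d j = c) :
    ∑ j ∈ range n, d j / 2 ^ (j + 1) = c * (1 - (1/2) ^ n) := by
  induction n with
  | zero => simp
  | succ n ih =>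
    rw [sum_range_succ, ih fun j hj => h j (by omega), h n (by omega)]
    simp only [one_div, inv_pow]
    ring

lemma exists_int_eq_add_sub_of_mul {c ε x : ℝ} (hc : c = 0 ∨ c = 1 ∨ c = -1)
    (hx : x = c * ε ∨ x = c * (1 - ε)) : ∃ m : ℤ, x = m ∨ x = m + ε ∨ x = m - ε := by
  rcases hc with rfl | rfl | rfl <;> rcases hx with rfl | rfl
  · exact ⟨0, by norm_num⟩
  · exact ⟨0, by norm_num⟩
  · exact ⟨0, Or.inr (Or.inl (by ring))⟩
  · exact ⟨1, Or.inr (Or.inr (by push_cast; ring))⟩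
  · exact ⟨0, Or.inr (Or.inr (by push_cast; ring))⟩
  · exact ⟨-1, Or.inr (Or.inl (by push_cast; ring))⟩

lemma ite_sub_ite_trichotomy (a b : Bool) :
    (if a then (1 : ℝ) else 0) - (if b then 1 else 0) = 0 ∨
      (if a then (1 : ℝ) else 0) - (if b then 1 else 0) = 1 ∨
      (if a then (1 : ℝ) else 0) - (if b then 1 else 0) = -1 := by
  cases a <;> cases b <;> norm_num

lemma ite_not_sub_ite_not (a b : Bool) :
    (if !a then (1 : ℝ) else 0) - (if !b then 1 else 0) =
      -((if a then (1 : ℝ) else 0) - (if b then 1 else 0)) := by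
  cases a <;> cases b <;> norm_num

end QuadraticPuzzle

theorem stmt19_general (f : ℂ → ℂ) (hf : ∀ z, f z = z + z ^ 2)
    (A : Bool → Set ℂ)
    (hA : ∀ b, A b = {z : ℂ | 1/2 < ‖z + 1/2‖ ∧
        ‖z + 1/2‖ < 2 ∧ (if b then z.im < 0 else 0 < z.im)})
    (piece : ℕ → (ℕ → Bool) → Set ℂ)
    (hpiece : ∀ n i, piece n i = {z : ℂ | ∀ j < n, f^[j] z ∈ A (i j)})
    (n : ℕ) (i i' : ℕ → Bool)
    (hint : (closure (piece n i) ∩ closure (piece n i')).Nonempty)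
    (bnum : (ℕ → Bool) → ℝ)
    (hbnum : ∀ j : ℕ → Bool,
      bnum j = ∑ k ∈ Finset.range n, (if j k then (1 : ℝ) else 0) / 2 ^ (k + 1)) :
    ∃ m : ℤ, bnum i - bnum i' = m ∨
      bnum i - bnum i' = m + (1/2 : ℝ) ^ n ∨
      bnum i - bnum i' = m - (1/2 : ℝ) ^ n := by
  obtain rfl : f = QuadraticPuzzle.f := funext hf
  obtain rfl : A = QuadraticPuzzle.A := funext hA
  obtain rfl : piece = QuadraticPuzzle.piece := funext fun n => funext (hpiece n)
  obtain ⟨z, hz, hz'⟩ := hint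
  set d : ℕ → ℝ := fun j => (if i j then 1 else 0) - (if i' j then 1 else 0) with hd
  have hdiff : bnum i - bnum i' = ∑ j ∈ range n, d j / 2 ^ (j + 1) := by
    simp only [hbnum, hd, ← sum_sub_distrib, sub_div]
  rw [hdiff]
  rcases QuadraticPuzzle.itineraries_of_mem_closure_inter hz hz' with
    hagree | ⟨k, hk, hbelow, hflip⟩ | hconst
  · refine ⟨0, Or.inl ?_⟩
    rw [sum_eq_zero fun j hj => by simp [hd, hagree j (mem_range.1 hj)], Int.cast_zero]
  · refine QuadraticPuzzle.exists_int_eq_add_sub_of_mul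
      (QuadraticPuzzle.ite_sub_ite_trichotomy (i k) (i' k))
      (Or.inl (QuadraticPuzzle.sum_div_two_pow_of_flip hk (fun j hj => ?_) fun j hkj hjn => ?_))
    · simp [hd, hbelow j hj]
    · obtain ⟨h, h'⟩ := hflip j hkj hjn
      simp only [hd, h, h', QuadraticPuzzle.ite_not_sub_ite_not]
  · refine QuadraticPuzzle.exists_int_eq_add_sub_of_mul
      (QuadraticPuzzle.ite_sub_ite_trichotomy (i 0) (i' 0))
      (Or.inr (QuadraticPuzzle.sum_div_two_pow_of_const fun j hj => ?_))
    simp [hd, (hconst j hj).1, (hconst j hj).2]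

/-- Puzzle-piece combinatorics for `f₀(z) = z + z²`: if the closures of two
level-`n` puzzle pieces `𝔸_{i₀…i_{n-1}}`, `𝔸_{i'₀…i'_{n-1}}` intersect, then the
associated dyadic numbers `b(i) = Σ i_j 2^{-(j+1)}` satisfy `b(i) = b(i')` or
`b(i) = b(i') ± 2^{-n}` modulo `1`. -/
theorem stmt19 (f : ℂ → ℂ) (hf : ∀ z, f z = z + z ^ 2)
    (A : Bool → Set ℂ)
    (hA : ∀ b, A b = {z : ℂ | 1/2 < ‖z + 1/2‖ ∧
        ‖z + 1/2‖ < 2 ∧ (if b then z.im < 0 else 0 < z.im)})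
    (piece : ℕ → (ℕ → Bool) → Set ℂ)
    (hpiece : ∀ n i, piece n i = {z : ℂ | ∀ j < n, f^[j] z ∈ A (i j)})
    (n : ℕ) (hn : 1 ≤ n) (i i' : ℕ → Bool)
    (hint : (closure (piece n i) ∩ closure (piece n i')).Nonempty)
    (bnum : (ℕ → Bool) → ℝ)
    (hbnum : ∀ j : ℕ → Bool,
      bnum j = ∑ k ∈ Finset.range n, (if j k then (1 : ℝ) else 0) / 2 ^ (k + 1)) :
    ∃ m : ℤ, bnum i - bnum i' = m ∨
      bnum i - bnum i' = m + (1/2 : ℝ) ^ n ∨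
      bnum i - bnum i' = m - (1/2 : ℝ) ^ n :=
  stmt19_general f hf A hA piece hpiece n i i' hint bnum hbnum
end
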